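/- Let α, β, B be positive real numbers with α not an integer, let a ∈ ℝ, and let m be the smallest non-negative integer such that B + mβ − α − 1 is not a negative integer. Then for every z > 0, the Riemann–Liouville derivative satisfies (d^α/dz^α)( z^{B−1} · E_{β,B}(a z^{β}) ) = a^m · z^{B+mβ−α−1} · E_{β, B+mβ−α}(a z^{β}). -/

import Mathlib

open Real MeasureTheory

/-- Riemann–Liouville fractional derivative of order `α` (with `n = ⌈α⌉₊`, so that
`n - 1 < α < n` when `α > 0` is not an integer). -/
noncomputable def rlDeriv (α : ℝ) (f : ℝ → ℝ) (z : ℝ) : ℝ :=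
  (1 / Real.Gamma ((⌈α⌉₊ : ℝ) - α)) *
    iteratedDeriv ⌈α⌉₊
      (fun x => ∫ s in (0:ℝ)..x, (x - s) ^ ((⌈α⌉₊ : ℝ) - α - 1) * f s) z

/-- Riemann–Liouville derivative of a complex-valued function,
applied to its real and imaginary parts. -/
noncomputable def rlDerivC (α : ℝ) (f : ℝ → ℂ) (z : ℝ) : ℂ :=
  (rlDeriv α (fun x => (f x).re) z : ℂ) +
    (rlDeriv α (fun x => (f x).im) z : ℂ) * Complex.I

/-- The Mittag-Leffler function `E_{ρ,β}(x)`.  (Recall that in Mathlib the real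
Gamma function vanishes at nonpositive integers, so `1/Γ` is `0` there.) -/
noncomputable def mittagLeffler (ρ β x : ℝ) : ℝ :=
  ∑' i : ℕ, x ^ i / Real.Gamma (ρ * i + β)

/-- The generalized Wright function `ₚΨ_q[x | (A_i, a_i); (B_j, b_j)]`. -/
noncomputable def genWright {p q : ℕ} (A a : Fin p → ℝ) (B b : Fin q → ℝ) (x : ℝ) : ℝ :=
  ∑' k : ℕ, ((∏ i, Real.Gamma (A i + a i * k)) / (∏ j, Real.Gamma (B j + b j * k)))
      * x ^ k / (Nat.factorial k : ℝ)

/-- The Wright function `Ψ(x; ρ, β)`. -/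
noncomputable def wrightFn (x ρ β : ℝ) : ℝ :=
  ∑' i : ℕ, x ^ i / ((Nat.factorial i : ℝ) * Real.Gamma (ρ * i + β))

/-- The Fox H-function `H^{m,0}_{p,q}[w | (A_i,a_i); (B_j,b_j)]`, given by its
Mellin–Barnes integral along the vertical line with real abscissa `γ`. -/
noncomputable def foxH {p q : ℕ} (m : ℕ) (A a : Fin p → ℝ) (B b : Fin q → ℝ)
    (γ : ℝ) (w : ℝ) : ℂ :=
  ((1 / (2 * Real.pi) : ℝ) : ℂ) * ∫ t : ℝ,
    (∏ j : Fin q, if (j : ℕ) < m then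
        Complex.Gamma ((B j : ℂ) - (b j : ℂ) * ((γ : ℂ) + (t : ℂ) * Complex.I)) else 1) /
      ((∏ i : Fin p, Complex.Gamma ((A i : ℂ) - (a i : ℂ) * ((γ : ℂ) + (t : ℂ) * Complex.I))) *
        (∏ j : Fin q, if (j : ℕ) < m then 1 else
          Complex.Gamma (1 - (B j : ℂ) + (b j : ℂ) * ((γ : ℂ) + (t : ℂ) * Complex.I)))) *
    (w : ℂ) ^ ((γ : ℂ) + (t : ℂ) * Complex.I)

/-- `x` is not a negative integer. -/
def notNegInt (x : ℝ) : Prop := ∀ j : ℤ, j < 0 → x ≠ (j : ℝ)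

/-- `x` is not a nonpositive integer. -/
def notNonposInt (x : ℝ) : Prop := ∀ j : ℤ, j ≤ 0 → x ≠ (j : ℝ)

/-!
For `x > 0` write `x^(t-1) E_{β,t}(a x^β)` as the generalized power series
`mlSeries a β t x = ∑ aⁱ x^(βi+t-1) / Γ(βi+t)`. Convolution with `(x-s)^(μ-1)` acts termwise
through the Beta integral and turns `t` into `t + μ` (times `Γ μ`), while differentiation acts
termwise and turns `t` into `t - 1`, because `p / Γ(p+1) = 1 / Γ(p)` also at the poles of `Γ`.
With `μ = ⌈α⌉ - α` the Riemann–Liouville derivative therefore maps `t = B` to `t = B - α`. The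
first `m` coefficients of that series carry `1 / Γ` at a pole, so they vanish, and reindexing the
remaining ones gives `a^m z^(B+mβ-α-1) E_{β,B+mβ-α}(a z^β)`.
-/

open Filter Topology Set

namespace Real

lemma div_Gamma_add_one (s : ℝ) : s / Gamma (s + 1) = (Gamma s)⁻¹ := by
  rcases eq_or_ne s 0 with rfl | hs
  · simp [Gamma_zero]
  · rw [Gamma_add_one hs, div_mul_cancel_left₀ hs]

/-- Truncating Euler's integral to `(R, ∞)`. -/
lemma rpow_mul_exp_neg_le_Gamma {x R : ℝ} (hx : 1 ≤ x) (hR : 0 ≤ R) :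
    R ^ (x - 1) * exp (-R) ≤ Gamma x := by
  have hint := GammaIntegral_convergent (by linarith : 0 < x)
  rw [Gamma_eq_integral (by linarith), ← integral_exp_neg_Ioi, ← integral_const_mul]
  calc ∫ t in Ioi R, R ^ (x - 1) * exp (-t)
      ≤ ∫ t in Ioi R, exp (-t) * t ^ (x - 1) := by
        refine setIntegral_mono_on ((integrableOn_exp_neg_Ioi R).const_mul _)
          (hint.mono_set (Ioi_subset_Ioi hR)) measurableSet_Ioi fun t ht => ?_
        rw [mul_comm]
        gcongr
        exact le_of_lt ht
    _ ≤ ∫ t in Ioi 0, exp (-t) * t ^ (x - 1) :=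
        setIntegral_mono_set hint
          ((ae_restrict_iff' measurableSet_Ioi).2 (ae_of_all _ fun t (ht : 0 < t) => by
            positivity))
          (Ioi_subset_Ioi hR).eventuallyLE

lemma summable_pow_div_Gamma {β : ℝ} (hβ : 0 < β) (c q : ℝ) :
    Summable fun i : ℕ => q ^ i / Gamma (β * i + c) := by
  -- `R ^ β = 2 |q| + 1`, so the bound `R ^ (βi + c - 1) e^(-R) ≤ Γ(βi + c)` beats `|q| ^ i`
  -- by a geometric factor.
  set R := (2 * |q| + 1) ^ β⁻¹
  have hR : 0 < R := by positivity
  have hRβ : R ^ β = 2 * |q| + 1 := by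
    rw [← rpow_mul (by positivity), inv_mul_cancel₀ hβ.ne', rpow_one]
  have hratio : |q| / (2 * |q| + 1) < 1 := by
    rw [div_lt_one (by positivity)]; linarith [abs_nonneg q]
  have hgeom := (summable_geometric_of_lt_one (by positivity) hratio).mul_left
    (exp R * R ^ (1 - c))
  refine hgeom.of_norm_bounded_eventually_nat ?_
  have hlarge : Tendsto (fun i : ℕ => β * i + c) atTop atTop :=
    tendsto_atTop_add_const_right _ c
      (tendsto_natCast_atTop_atTop.const_mul_atTop hβ)
  filter_upwards [hlarge.eventually_ge_atTop 1] with i hi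
  have hΓ : R ^ (β * i + c - 1) * exp (-R) ≤ Gamma (β * i + c) :=
    rpow_mul_exp_neg_le_Gamma hi hR.le
  have hsplit : R ^ (β * i + c - 1) = (2 * |q| + 1) ^ i / R ^ (1 - c) := by
    rw [← hRβ, ← rpow_natCast, ← rpow_mul hR.le, eq_div_iff (by positivity),
      ← rpow_add hR]
    ring_nf
  rw [norm_div, norm_pow, norm_eq_abs, norm_of_nonneg (hΓ.trans' (by positivity)),
    div_le_iff₀ (hΓ.trans_lt' (by positivity)), div_pow]
  refine le_trans ?_ (mul_le_mul_of_nonneg_left hΓ (by positivity))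
  rw [hsplit]
  field_simp
  rw [mul_assoc, ← exp_add]
  simp

lemma rpow_le_max_of_mem_Icc {l u y : ℝ} (hl : 0 < l) (hy : y ∈ Icc l u) (p : ℝ) :
    y ^ p ≤ max (l ^ p) (u ^ p) := by
  rcases le_total 0 p with hp | hp
  · exact (rpow_le_rpow (hl.le.trans hy.1) hy.2 hp).trans (le_max_right _ _)
  · exact (rpow_le_rpow_of_nonpos hl hy.1 hp).trans (le_max_left _ _)

end Real

lemma Gamma_add_one_eq_zero_of_not_notNegInt {x : ℝ} (hx : ¬ notNegInt x) : Gamma (x + 1) = 0 := by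
  simp only [notNegInt, not_forall, not_not] at hx
  obtain ⟨j, hj, rfl⟩ := hx
  obtain ⟨m, hm⟩ := Int.eq_ofNat_of_zero_le (by omega : 0 ≤ -(j + 1))
  rw [show (j : ℝ) + 1 = -(m : ℤ) by rw [← hm]; push_cast; ring]
  exact Gamma_neg_nat_eq_zero m

lemma intervalIntegrable_sub_rpow_mul_rpow {u v x : ℝ} (hu : 0 < u) (hv : 0 < v) (hx : 0 < x) :
    IntervalIntegrable (fun s => (x - s) ^ (u - 1) * s ^ (v - 1)) volume 0 x := by
  have hleft : IntervalIntegrable (fun s => (x - s) ^ (u - 1) * s ^ (v - 1)) volume 0 (x / 2) := by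
    refine (intervalIntegral.intervalIntegrable_rpow' (by linarith)).continuousOn_mul
      fun s hs => ContinuousAt.continuousWithinAt ?_
    rw [uIcc_of_le (by positivity)] at hs
    exact (continuousAt_const.sub continuousAt_id).rpow_const (Or.inl (by simp; linarith [hs.2]))
  have hright : IntervalIntegrable (fun s => (x - s) ^ (u - 1) * s ^ (v - 1)) volume (x / 2) x := by
    have h := (intervalIntegral.intervalIntegrable_rpow' (r := u - 1) (a := 0) (b := x / 2)
      (by linarith)).comp_sub_left x
    rw [sub_zero, show x - x / 2 = x / 2 by ring] at h
    refine h.symm.mul_continuousOn fun s hs => ContinuousAt.continuousWithinAt ?_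
    rw [uIcc_of_le (by linarith)] at hs
    exact continuousAt_id.rpow_const (Or.inl (by simp; linarith [hs.1]))
  exact hleft.trans hright

lemma integral_sub_rpow_mul_rpow {u v x : ℝ} (hu : 0 < u) (hv : 0 < v) (hx : 0 < x) :
    ∫ s in (0 : ℝ)..x, (x - s) ^ (u - 1) * s ^ (v - 1)
      = Gamma u * Gamma v / Gamma (u + v) * x ^ (u + v - 1) := by
  have hbeta : Complex.betaIntegral v u = Gamma u * Gamma v / Gamma (u + v) := by
    have hΓ := Complex.Gamma_mul_Gamma_eq_betaIntegral (s := v) (t := u) (by simpa) (by simpa)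
    rw [← Complex.ofReal_add, Complex.Gamma_ofReal, Complex.Gamma_ofReal,
      Complex.Gamma_ofReal] at hΓ
    rw [eq_div_iff (by exact_mod_cast (Gamma_pos_of_pos (by linarith)).ne'), add_comm u,
      mul_comm, ← hΓ, mul_comm]
  apply Complex.ofReal_injective
  have hintegrand : EqOn (fun s : ℝ => (((x - s) ^ (u - 1) * s ^ (v - 1) : ℝ) : ℂ))
      (fun s : ℝ => (s : ℂ) ^ ((v : ℂ) - 1) * ((x : ℂ) - s) ^ ((u : ℂ) - 1)) (uIcc 0 x) := by
    intro s hs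
    rw [uIcc_of_le hx.le] at hs
    push_cast
    rw [Complex.ofReal_cpow (by linarith [hs.2]), Complex.ofReal_cpow hs.1, mul_comm]
    push_cast
    rfl
  rw [← intervalIntegral.integral_ofReal, intervalIntegral.integral_congr hintegrand,
    Complex.betaIntegral_scaled _ _ hx, hbeta]
  push_cast
  rw [Complex.ofReal_cpow hx.le]
  push_cast
  ring_nf

noncomputable def mlTerm (a β t : ℝ) (i : ℕ) (x : ℝ) : ℝ :=
  a ^ i * x ^ (β * i + t - 1) / Gamma (β * i + t)

noncomputable def mlSeries (a β t x : ℝ) : ℝ :=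
  ∑' i, mlTerm a β t i x

section
variable {a β t x : ℝ}

lemma mlTerm_eq (hx : 0 < x) (i : ℕ) :
    mlTerm a β t i x = (a * x ^ β) ^ i / Gamma (β * i + t) * x ^ (t - 1) := by
  rw [mlTerm, add_sub_assoc, rpow_add hx, rpow_mul hx.le, rpow_natCast, mul_pow]
  ring

lemma mlSeries_eq (hx : 0 < x) :
    mlSeries a β t x = x ^ (t - 1) * mittagLeffler β t (a * x ^ β) := by
  simp_rw [mlSeries, mittagLeffler, mlTerm_eq hx, ← tsum_mul_left, mul_comm]

lemma summable_mlTerm (hβ : 0 < β) (hx : 0 < x) : Summable (mlTerm a β t · x) := by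
  simpa only [mlTerm_eq hx] using
    (summable_pow_div_Gamma hβ t (a * x ^ β)).mul_right (x ^ (t - 1))

lemma norm_mlTerm_le {l u : ℝ} (hβ : 0 ≤ β) (hl : 0 < l) (hx : x ∈ Icc l u) (i : ℕ) :
    ‖mlTerm a β t i x‖ ≤
      max (l ^ (t - 1)) (u ^ (t - 1)) * ‖(|a| * u ^ β) ^ i / Gamma (β * i + t)‖ := by
  have hx0 : 0 < x := hl.trans_le hx.1
  rw [mlTerm_eq hx0, norm_mul, norm_of_nonneg (rpow_nonneg hx0.le _), mul_comm]
  gcongr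
  · exact rpow_le_max_of_mem_Icc hl hx _
  · simp only [norm_eq_abs, abs_div, abs_pow, abs_mul, abs_abs,
      abs_of_nonneg (rpow_nonneg hx0.le _), abs_of_nonneg (rpow_nonneg (hx0.le.trans hx.2) _)]
    gcongr
    exact hx.2

lemma hasDerivAt_mlTerm (hx : 0 < x) (i : ℕ) :
    HasDerivAt (mlTerm a β t i) (mlTerm a β (t - 1) i x) x := by
  have h := ((hasDerivAt_rpow_const (p := β * i + t - 1) (Or.inl hx.ne')).const_mul
    (a ^ i)).div_const (Gamma (β * i + t))
  refine h.congr_deriv ?_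
  set p := β * i + t - 1
  rw [mlTerm, show β * i + (t - 1) = p by ring, show β * i + t = p + 1 by ring,
    div_eq_mul_inv _ (Gamma p), ← div_Gamma_add_one p]
  ring

lemma hasDerivAt_mlSeries (hβ : 0 < β) (hx : 0 < x) :
    HasDerivAt (mlSeries a β t) (mlSeries a β (t - 1) x) x := by
  set M := max ((x / 2) ^ (t - 1 - 1)) ((2 * x) ^ (t - 1 - 1))
  refine hasDerivAt_tsum_of_isPreconnected
    ((summable_pow_div_Gamma hβ (t - 1) (|a| * (2 * x) ^ β)).norm.mul_left M)
    isOpen_Ioo isPreconnected_Ioo (fun i y hy => hasDerivAt_mlTerm (by linarith [hy.1] : 0 < y) i)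
    (fun i y hy => norm_mlTerm_le hβ.le (by positivity) (Ioo_subset_Icc_self hy) i)
    (y₀ := x) ⟨by linarith, by linarith⟩ (summable_mlTerm hβ hx) ⟨by linarith, by linarith⟩

lemma iteratedDeriv_mlSeries (hβ : 0 < β) (hx : 0 < x) (k : ℕ) :
    iteratedDeriv k (mlSeries a β t) x = mlSeries a β (t - k) x := by
  induction k generalizing x with
  | zero => simp
  | succ k ih =>
    have hev : iteratedDeriv k (mlSeries a β t) =ᶠ[𝓝 x] mlSeries a β (t - k) :=
      eventually_of_mem (isOpen_Ioi.mem_nhds hx) fun y hy => ih hy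
    rw [iteratedDeriv_succ, hev.deriv_eq, (hasDerivAt_mlSeries hβ hx).deriv]
    push_cast
    ring_nf

lemma integral_sub_rpow_mul_mlSeries {μ : ℝ} (hβ : 0 < β) (ht : 0 < t) (hμ : 0 < μ) (hx : 0 < x) :
    ∫ s in (0 : ℝ)..x, (x - s) ^ (μ - 1) * mlSeries a β t s = Gamma μ * mlSeries a β (t + μ) x := by
  have hv : ∀ i : ℕ, 0 < β * i + t := fun i => by positivity
  have hterm : ∀ (i : ℕ) (s : ℝ), (x - s) ^ (μ - 1) * mlTerm a β t i s
      = a ^ i / Gamma (β * i + t) * ((x - s) ^ (μ - 1) * s ^ (β * i + t - 1)) := by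
    intro i s; rw [mlTerm]; ring
  have hkernel : ∀ i : ℕ, ∫ s in Ioc 0 x, (x - s) ^ (μ - 1) * s ^ (β * i + t - 1)
      = Gamma μ * Gamma (β * i + t) / Gamma (μ + (β * i + t)) * x ^ (μ + (β * i + t) - 1) := by
    intro i
    rw [← intervalIntegral.integral_of_le hx.le, integral_sub_rpow_mul_rpow hμ (hv i) hx]
  have hval : ∀ i : ℕ,
      a ^ i / Gamma (β * i + t) * ∫ s in Ioc 0 x, (x - s) ^ (μ - 1) * s ^ (β * i + t - 1)
        = Gamma μ * mlTerm a β (t + μ) i x := by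
    intro i
    rw [hkernel, mlTerm, show μ + (β * i + t) = β * i + (t + μ) by ring]
    field_simp [(Gamma_pos_of_pos (hv i)).ne']
  have hintegrable : ∀ i : ℕ,
      IntegrableOn (fun s => (x - s) ^ (μ - 1) * mlTerm a β t i s) (Ioc 0 x) := by
    intro i
    simp_rw [hterm]
    exact ((intervalIntegrable_iff_integrableOn_Ioc_of_le hx.le).mp
      (intervalIntegrable_sub_rpow_mul_rpow hμ (hv i) hx)).const_mul _
  have hnorm : ∀ i : ℕ, ∫ s in Ioc 0 x, ‖(x - s) ^ (μ - 1) * mlTerm a β t i s‖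
      = ‖Gamma μ * mlTerm a β (t + μ) i x‖ := by
    intro i
    have hkernel_nonneg : ∀ s ∈ Ioc 0 x, 0 ≤ (x - s) ^ (μ - 1) * s ^ (β * i + t - 1) :=
      fun s hs => mul_nonneg (rpow_nonneg (by linarith [hs.2]) _) (rpow_nonneg hs.1.le _)
    simp_rw [← hval, hterm, norm_mul (a ^ i / _), integral_const_mul]
    rw [norm_of_nonneg (setIntegral_nonneg measurableSet_Ioc hkernel_nonneg)]
    exact congrArg _ (setIntegral_congr_fun measurableSet_Ioc fun s hs =>
      norm_of_nonneg (hkernel_nonneg s hs))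
  rw [intervalIntegral.integral_of_le hx.le]
  simp_rw [mlSeries, ← tsum_mul_left]
  rw [← integral_tsum_of_summable_integral_norm hintegrable
    (by simpa only [hnorm] using ((summable_mlTerm hβ hx).mul_left (Gamma μ)).norm)]
  simp_rw [hterm, integral_const_mul, hval]

lemma mlTerm_add (i m : ℕ) : mlTerm a β t (i + m) x = a ^ m * mlTerm a β (t + β * m) i x := by
  simp only [mlTerm, pow_add]
  push_cast
  ring_nf

lemma mlSeries_eq_pow_mul_mlSeries_add {m : ℕ} (hpoles : ∀ i < m, Gamma (β * i + t) = 0) :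
    mlSeries a β t x = a ^ m * mlSeries a β (t + β * m) x := by
  have hsupport : Function.support (mlTerm a β t · x) ⊆ range (· + m) := by
    intro i hi
    by_contra hlt
    have him : i < m := by
      by_contra h
      exact hlt ⟨i - m, by simp only; omega⟩
    exact hi (by simp only [mlTerm, hpoles i him, div_zero])
  rw [mlSeries, mlSeries, ← tsum_mul_left, ← (add_left_injective m).tsum_eq hsupport]
  simp_rw [mlTerm_add]

end

theorem statement0_general (α β B : ℝ) (hβ : 0 < β) (hB : 0 < B)
    (hαni : ∀ k : ℤ, α ≠ (k : ℝ)) (a : ℝ) (m : ℕ)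
    (hmin : ∀ m' : ℕ, m' < m → ¬ notNegInt (B + m' * β - α - 1)) :
    ∀ z : ℝ, 0 < z →
      rlDeriv α (fun x => x ^ (B - 1) * mittagLeffler β B (a * x ^ β)) z =
        a ^ m * z ^ (B + m * β - α - 1) * mittagLeffler β (B + m * β - α) (a * z ^ β) := by
  intro z hz
  set n := ⌈α⌉₊
  have hμ : 0 < (n : ℝ) - α :=
    sub_pos.2 ((Nat.le_ceil α).lt_of_ne (by exact_mod_cast hαni n))
  have hpoles : ∀ i < m, Gamma (β * i + (B - α)) = 0 := fun i hi => by
    simpa only [show B + i * β - α - 1 + 1 = β * i + (B - α) by ring] using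
      Gamma_add_one_eq_zero_of_not_notNegInt (hmin i hi)
  have hintegral : (fun x => ∫ s in (0 : ℝ)..x,
        (x - s) ^ ((n : ℝ) - α - 1) * (s ^ (B - 1) * mittagLeffler β B (a * s ^ β)))
      =ᶠ[𝓝 z] fun x => Gamma (n - α) * mlSeries a β (B + (n - α)) x := by
    filter_upwards [isOpen_Ioi.mem_nhds hz] with x (hx : 0 < x)
    rw [← integral_sub_rpow_mul_mlSeries hβ hB hμ hx]
    refine intervalIntegral.integral_congr_ae (ae_of_all _ fun s hs => ?_)
    rw [uIoc_of_le hx.le] at hs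
    rw [mlSeries_eq hs.1]
  rw [rlDeriv, hintegral.iteratedDeriv_eq, iteratedDeriv_const_mul_field,
    iteratedDeriv_mlSeries hβ hz, one_div, inv_mul_cancel_left₀ (Gamma_pos_of_pos hμ).ne',
    show B + (n - α) - n = B - α by ring, mlSeries_eq_pow_mul_mlSeries_add hpoles, mlSeries_eq hz,
    show B - α + β * m = B + m * β - α by ring, mul_assoc]

/-- fractional derivative of `z^{B-1} E_{β,B}(a z^β)`. -/
theorem statement0 (α β B : ℝ) (hα : 0 < α) (hβ : 0 < β) (hB : 0 < B)
    (hαni : ∀ k : ℤ, α ≠ (k : ℝ)) (a : ℝ) (m : ℕ)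
    (hm : notNegInt (B + m * β - α - 1))
    (hmin : ∀ m' : ℕ, m' < m → ¬ notNegInt (B + m' * β - α - 1)) :
    ∀ z : ℝ, 0 < z →
      rlDeriv α (fun x => x ^ (B - 1) * mittagLeffler β B (a * x ^ β)) z =
        a ^ m * z ^ (B + m * β - α - 1) * mittagLeffler β (B + m * β - α) (a * z ^ β) :=
  statement0_general α β B hβ hB hαni a m hmin
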